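/- The function x ↦ Tr((Aᵀ diag(x) A)^{-1}) is convex on the set {x ∈ ℝ^m : x ≥ 0, Aᵀ diag(x) A ≻ 0} (convexity of the A-criterion). -/

import Mathlib

/-!
For positive definite `P`, `c ⬝ᵥ P⁻¹ *ᵥ c = sup_y (2 c ⬝ᵥ y - y ⬝ᵥ P *ᵥ y)`, a supremum of affine
functions of `P`; hence it is convex in `P`, and so is `Tr P⁻¹ = ∑ⱼ eⱼ ⬝ᵥ P⁻¹ *ᵥ eⱼ`. The
A-criterion is this function composed with the linear map `x ↦ Aᵀ diag(x) A`.
-/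

open Matrix

theorem ConvexOn.finset_sum {𝕜 E β ι : Type*} [Semiring 𝕜] [PartialOrder 𝕜] [AddCommMonoid E]
    [AddCommMonoid β] [PartialOrder β] [IsOrderedAddMonoid β] [SMul 𝕜 E] [Module 𝕜 β]
    {s : Set E} {f : ι → E → β} (t : Finset ι) (hs : Convex 𝕜 s)
    (hf : ∀ i ∈ t, ConvexOn 𝕜 s (f i)) : ConvexOn 𝕜 s fun x => ∑ i ∈ t, f i x := by
  classical
  induction t using Finset.induction_on with
  | empty => simpa using convexOn_const 0 hs
  | insert j t hj ih =>
    simp_rw [Finset.sum_insert hj]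
    exact (hf j (t.mem_insert_self j)).add (ih fun i hi => hf i (Finset.mem_insert_of_mem hi))

namespace Matrix

theorem convex_setOf_posDef {ι : Type*} : Convex ℝ {P : Matrix ι ι ℝ | P.PosDef} := by
  intro P hP Q hQ a b ha hb hab
  rcases ha.eq_or_lt with rfl | ha
  · simpa [show b = 1 by linarith] using hQ
  · exact (hP.smul ha).add_posSemidef (hQ.posSemidef.smul hb)

variable {ι : Type*} [Fintype ι] [DecidableEq ι] {P : Matrix ι ι ℝ}

theorem PosDef.mulVec_inv_mulVec (hP : P.PosDef) (c : ι → ℝ) : P *ᵥ (P⁻¹ *ᵥ c) = c := by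
  rw [mulVec_mulVec, mul_nonsing_inv _ (isUnit_iff_isUnit_det P |>.mp hP.isUnit), one_mulVec]

/-- Completing the square: the gap is `(y - w) ⬝ᵥ P *ᵥ (y - w)` with `w = P⁻¹ *ᵥ c`, so equality
holds at `y = P⁻¹ *ᵥ c`. -/
theorem PosDef.two_mul_dotProduct_sub_le (hP : P.PosDef) (c y : ι → ℝ) :
    2 * (c ⬝ᵥ y) - y ⬝ᵥ (P *ᵥ y) ≤ c ⬝ᵥ (P⁻¹ *ᵥ c) := by
  set w := P⁻¹ *ᵥ c
  have hPw : P *ᵥ w = c := hP.mulVec_inv_mulVec c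
  have hwPy : w ⬝ᵥ (P *ᵥ y) = c ⬝ᵥ y := by
    have hPT : Pᵀ = P := hP.1
    rw [← hPT, dotProduct_transpose_mulVec, hPw, dotProduct_comm]
  have hsq : 0 ≤ (y - w) ⬝ᵥ (P *ᵥ (y - w)) := by
    simpa using hP.posSemidef.dotProduct_mulVec_nonneg (y - w)
  rw [mulVec_sub, dotProduct_sub, sub_dotProduct, sub_dotProduct, hwPy, hPw,
    dotProduct_comm y c, dotProduct_comm w c] at hsq
  linarith

theorem PosDef.two_mul_dotProduct_inv_mulVec_sub (hP : P.PosDef) (c : ι → ℝ) :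
    2 * (c ⬝ᵥ (P⁻¹ *ᵥ c)) - (P⁻¹ *ᵥ c) ⬝ᵥ (P *ᵥ (P⁻¹ *ᵥ c)) = c ⬝ᵥ (P⁻¹ *ᵥ c) := by
  rw [hP.mulVec_inv_mulVec, dotProduct_comm]
  ring

theorem convexOn_dotProduct_inv_mulVec (c : ι → ℝ) :
    ConvexOn ℝ {P : Matrix ι ι ℝ | P.PosDef} fun P => c ⬝ᵥ (P⁻¹ *ᵥ c) := by
  refine ⟨convex_setOf_posDef, fun P hP Q hQ a b ha hb hab => ?_⟩
  have hR : (a • P + b • Q).PosDef := convex_setOf_posDef hP hQ ha hb hab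
  set u := (a • P + b • Q)⁻¹ *ᵥ c
  have hsplit : 2 * (c ⬝ᵥ u) - u ⬝ᵥ ((a • P + b • Q) *ᵥ u) =
      a * (2 * (c ⬝ᵥ u) - u ⬝ᵥ (P *ᵥ u)) + b * (2 * (c ⬝ᵥ u) - u ⬝ᵥ (Q *ᵥ u)) := by
    simp only [add_mulVec, smul_mulVec, dotProduct_add, dotProduct_smul, smul_eq_mul]
    linear_combination 2 * (c ⬝ᵥ u) * hab.symm
  calc c ⬝ᵥ u = 2 * (c ⬝ᵥ u) - u ⬝ᵥ ((a • P + b • Q) *ᵥ u) :=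
        (hR.two_mul_dotProduct_inv_mulVec_sub c).symm
    _ = a * (2 * (c ⬝ᵥ u) - u ⬝ᵥ (P *ᵥ u)) + b * (2 * (c ⬝ᵥ u) - u ⬝ᵥ (Q *ᵥ u)) := hsplit
    _ ≤ a * (c ⬝ᵥ (P⁻¹ *ᵥ c)) + b * (c ⬝ᵥ (Q⁻¹ *ᵥ c)) := by
        gcongr
        exacts [hP.two_mul_dotProduct_sub_le c u, hQ.two_mul_dotProduct_sub_le c u]

theorem trace_eq_sum_single_dotProduct_mulVec (M : Matrix ι ι ℝ) :
    M.trace = ∑ j, Pi.single j 1 ⬝ᵥ (M *ᵥ Pi.single j 1) := by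
  simp [trace]

theorem convexOn_trace_inv : ConvexOn ℝ {P : Matrix ι ι ℝ | P.PosDef} fun P => P⁻¹.trace := by
  simp_rw [trace_eq_sum_single_dotProduct_mulVec]
  exact .finset_sum _ convex_setOf_posDef fun j _ => convexOn_dotProduct_inv_mulVec _

end Matrix

def informationMatrix {m n R : Type*} [Fintype m] [DecidableEq m] [CommSemiring R]
    (A : Matrix m n R) : (m → R) →ₗ[R] Matrix n n R where
  toFun x := Aᵀ * diagonal x * A
  map_add' x y := by
    rw [show diagonal (x + y) = diagonal x + diagonal y from (diagonal_add x y).symm,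
      Matrix.mul_add, Matrix.add_mul]
  map_smul' a x := by rw [diagonal_smul, Matrix.mul_smul, Matrix.smul_mul, RingHom.id_apply]

theorem A_criterion_convex_general
    (m n : ℕ) (A : Matrix (Fin m) (Fin n) ℝ) :
    ConvexOn ℝ
      {x : Fin m → ℝ | (∀ i, 0 ≤ x i) ∧ (Aᵀ * Matrix.diagonal x * A).PosDef}
      (fun x => ((Aᵀ * Matrix.diagonal x * A)⁻¹).trace) :=
  (convexOn_trace_inv.comp_linearMap (informationMatrix A)).subset (fun _ hx => hx.2)
    ((convex_Ici 0).inter (convex_setOf_posDef.linear_preimage (informationMatrix A)))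

/-- Convexity of the A-criterion `x ↦ Tr((Aᵀ diag(x) A)⁻¹)` on the set of
nonnegative weights making the information matrix positive definite. -/
theorem A_criterion_convex
    (m n : ℕ) (A : Matrix (Fin m) (Fin n) ℝ) (hA : A.rank = n) :
    ConvexOn ℝ
      {x : Fin m → ℝ | (∀ i, 0 ≤ x i) ∧ (Aᵀ * Matrix.diagonal x * A).PosDef}
      (fun x => ((Aᵀ * Matrix.diagonal x * A)⁻¹).trace) :=
  A_criterion_convex_general m n A
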